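/- Backward message through a linear-Gaussian node: if the backward message on x_k is Gaussian with mean 0 and positive definite precision P_k, the control prior on u is Gaussian with mean 0 and precision λR (λ > 0, R ≻ 0), and the transition is x_k = A x_{k−1} + B u + w with w ~ N(0, W_w⁻¹), then the induced backward message on x_{k−1}, after multiplication by a goal prior N(0, (λQ)⁻¹), is Gaussian with mean 0 and precision P_{k−1} = Aᵀ(P_k⁻¹ + B(λR)⁻¹Bᵀ + W_w⁻¹)⁻¹A + λQ, provided the indicated inverses exist. -/

import Mathlib

open MeasureTheory Matrix

/-- Unnormalized Gaussian kernel with mean `m` and precision matrix `W`. -/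
noncomputable def gaussKer {n : ℕ} (W : Matrix (Fin n) (Fin n) ℝ)
    (m z : Fin n → ℝ) : ℝ :=
  Real.exp (-(1 / 2) * ((z - m) ⬝ᵥ W *ᵥ (z - m)))

namespace Stmt9Aux

lemma dp_swap {m n : ℕ} (M : Matrix (Fin m) (Fin n) ℝ) (x : Fin m → ℝ) (z : Fin n → ℝ) :
    x ⬝ᵥ M *ᵥ z = (Mᵀ *ᵥ x) ⬝ᵥ z := by
  rw [dotProduct_mulVec, ← vecMul_transpose, transpose_transpose]

lemma continuous_quad {n : ℕ} (W : Matrix (Fin n) (Fin n) ℝ) :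
    Continuous fun z : Fin n → ℝ => z ⬝ᵥ W *ᵥ z := by
  unfold dotProduct mulVec
  exact continuous_finset_sum _ fun i _ =>
    (continuous_apply i).mul (continuous_finset_sum _ fun j _ =>
      (continuous_const.mul (continuous_apply j)))

lemma continuous_mulVec {m n : ℕ} (B : Matrix (Fin m) (Fin n) ℝ) :
    Continuous fun v : Fin n → ℝ => B *ᵥ v := by
  unfold mulVec dotProduct
  exact continuous_pi fun i => continuous_finset_sum _ fun j _ =>
    (continuous_const.mul (continuous_apply j))

lemma posdef_eps {n : ℕ} {W : Matrix (Fin n) (Fin n) ℝ} (hW : W.PosDef) :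
    ∃ ε > 0, ∀ z : Fin n → ℝ, ε * ∑ i, z i ^ 2 ≤ z ⬝ᵥ W *ᵥ z := by
  rcases Nat.eq_zero_or_pos n with hn | hn
  · exact ⟨1, one_pos, fun z => by subst hn; simp [dotProduct]⟩
  have hposq : ∀ z : Fin n → ℝ, z ≠ 0 → 0 < z ⬝ᵥ W *ᵥ z := by
    intro z hz
    simpa using hW.dotProduct_mulVec_pos hz
  set E := EuclideanSpace ℝ (Fin n) with hE
  haveI : Nonempty (Fin n) := ⟨⟨0, hn⟩⟩
  have hfc : Continuous fun z : E => (z : Fin n → ℝ) ⬝ᵥ W *ᵥ (z : Fin n → ℝ) :=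
    (continuous_quad W).comp (EuclideanSpace.equiv (Fin n) ℝ).continuous
  have hsph : IsCompact (Metric.sphere (0 : E) 1) := isCompact_sphere 0 1
  have hne : (Metric.sphere (0 : E) 1).Nonempty := by
    refine ⟨EuclideanSpace.single ⟨0, hn⟩ (1 : ℝ), ?_⟩
    have h1 := EuclideanSpace.norm_single (𝕜 := ℝ) (⟨0, hn⟩ : Fin n) (1 : ℝ)
    simp only [mem_sphere_zero_iff_norm]
    exact h1.trans norm_one
  obtain ⟨z0, hz0mem, hmin⟩ := hsph.exists_isMinOn hne hfc.continuousOn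
  have hz0 : (z0 : Fin n → ℝ) ≠ 0 := by
    intro h
    have : ‖z0‖ = 1 := mem_sphere_zero_iff_norm.mp hz0mem
    rw [show z0 = 0 by simpa using h] at this
    simp at this
  refine ⟨z0 ⬝ᵥ W *ᵥ z0, hposq _ hz0, fun z => ?_⟩
  rcases eq_or_ne z 0 with rfl | hz
  · simp
  · set zE : E := WithLp.toLp 2 z with hzE
    have hzE0 : zE ≠ 0 := fun h => hz (by simpa [hzE] using congrArg WithLp.ofLp h)
    have hnorm : (0:ℝ) < ‖zE‖ := norm_pos_iff.mpr hzE0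
    set c : ℝ := ‖zE‖ with hc
    have hy : ((‖zE‖⁻¹ • zE : E)) ∈ Metric.sphere (0 : E) 1 := by
      simp [norm_smul, abs_of_pos (inv_pos.mpr hnorm), inv_mul_cancel₀ hnorm.ne']
      exact inv_mul_cancel₀ hnorm.ne'
    have hmin' := hmin hy
    have hsum : ∑ i, z i ^ 2 = c ^ 2 := by
      have := EuclideanSpace.norm_eq zE
      rw [hc, this]
      rw [Real.sq_sqrt (by positivity)]
      exact Finset.sum_congr rfl fun i _ => by simp [hzE, sq_abs]
    have hquad : ((‖zE‖⁻¹ • zE : E) : Fin n → ℝ) ⬝ᵥ W *ᵥ ((‖zE‖⁻¹ • zE : E) : Fin n → ℝ)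
        = c⁻¹ ^ 2 * (z ⬝ᵥ W *ᵥ z) := by
      show (c⁻¹ • z) ⬝ᵥ W *ᵥ (c⁻¹ • z) = c⁻¹ ^ 2 * (z ⬝ᵥ W *ᵥ z)
      rw [mulVec_smul, smul_dotProduct, dotProduct_smul]
      simp [smul_eq_mul]; ring
    have hmm : z0 ⬝ᵥ W *ᵥ z0 ≤ c⁻¹ ^ 2 * (z ⬝ᵥ W *ᵥ z) := by
      rw [← hquad]; exact hmin'
    have hc2 : (0:ℝ) < c ^ 2 := by positivity
    rw [hsum]
    calc (z0 ⬝ᵥ W *ᵥ z0) * c ^ 2 ≤ (c⁻¹ ^ 2 * (z ⬝ᵥ W *ᵥ z)) * c ^ 2 := by nlinarith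
      _ = z ⬝ᵥ W *ᵥ z := by field_simp

lemma integrable_gauss_eps {n : ℕ} {ε : ℝ} (hε : 0 < ε) :
    Integrable fun z : Fin n → ℝ => Real.exp (-ε * ∑ i, z i ^ 2) := by
  have h := (GaussianFourier.integrable_cexp_neg_mul_sum_add (b := (ε : ℂ)) (by simpa using hε)
    (fun _ : Fin n => 0)).norm
  refine h.congr (Filter.Eventually.of_forall fun z => ?_)
  simp only []
  rw [Complex.norm_exp]
  congr 1
  norm_num [Complex.add_re, Complex.mul_re, Complex.re_sum]
  left
  refine Finset.sum_congr rfl fun i _ => ?_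
  norm_cast

lemma integrable_gaussQuad {n : ℕ} {W : Matrix (Fin n) (Fin n) ℝ} (hW : W.PosDef) :
    Integrable fun z : Fin n → ℝ => Real.exp (-(1 / 2) * (z ⬝ᵥ W *ᵥ z)) := by
  obtain ⟨ε, hε, hle⟩ := posdef_eps hW
  refine (integrable_gauss_eps (half_pos hε)).mono' ?_ ?_
  · exact (Real.continuous_exp.comp
      ((continuous_const.mul (continuous_quad W)))).aestronglyMeasurable
  · refine Filter.Eventually.of_forall fun z => ?_
    rw [Real.norm_eq_abs, abs_of_pos (Real.exp_pos _)]
    apply Real.exp_le_exp.mpr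
    have := hle z
    rw [show -(ε / 2) * ∑ i, z i ^ 2 = -((1:ℝ)/2) * (ε * ∑ i, z i ^ 2) by ring]
    nlinarith
  
lemma quad_sub {k : ℕ} (W : Matrix (Fin k) (Fin k) ℝ) (hWs : Wᵀ = W)
    {d r w : Fin k → ℝ} (hr : W *ᵥ r = w) :
    (d - r) ⬝ᵥ W *ᵥ (d - r) = d ⬝ᵥ W *ᵥ d - 2 * (d ⬝ᵥ w) + r ⬝ᵥ w := by
  have h2 : r ⬝ᵥ W *ᵥ d = d ⬝ᵥ w := by rw [dp_swap, hWs, hr, dotProduct_comm]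
  have h1 : d ⬝ᵥ W *ᵥ r = d ⬝ᵥ w := by rw [hr]
  have h3 : r ⬝ᵥ W *ᵥ r = r ⬝ᵥ w := by rw [hr]
  simp only [sub_dotProduct, mulVec_sub, dotProduct_sub, h1, h2, h3]
  ring

lemma quad_add {k : ℕ} (W : Matrix (Fin k) (Fin k) ℝ) (hWs : Wᵀ = W)
    {p y w : Fin k → ℝ} (hp : W *ᵥ p = w) :
    (p + y) ⬝ᵥ W *ᵥ (p + y) = y ⬝ᵥ W *ᵥ y + 2 * (y ⬝ᵥ w) + p ⬝ᵥ w := by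
  have h2 : p ⬝ᵥ W *ᵥ y = y ⬝ᵥ w := by rw [dp_swap, hWs, hp, dotProduct_comm]
  have h1 : y ⬝ᵥ W *ᵥ p = y ⬝ᵥ w := by rw [hp]
  have h3 : p ⬝ᵥ W *ᵥ p = p ⬝ᵥ w := by rw [hp]
  simp only [add_dotProduct, mulVec_add, dotProduct_add, h1, h2, h3]
  ring

lemma key_identity {nx nu : ℕ} (Ww Pk : Matrix (Fin nx) (Fin nx) ℝ)
    (Rb : Matrix (Fin nu) (Fin nu) ℝ) (B : Matrix (Fin nx) (Fin nu) ℝ)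
    (hWs : Wwᵀ = Ww) (hRs : Rbᵀ = Rb) (hPs : Pkᵀ = Pk)
    (a w p r : Fin nx → ℝ) (q' : Fin nu → ℝ) (y : Fin nx → ℝ) (v : Fin nu → ℝ)
    (hp : Pk *ᵥ p = w) (hq : Rb *ᵥ q' = Bᵀ *ᵥ w)
    (hr : Ww *ᵥ r = w) (ha : a = p + B *ᵥ q' + r) :
    ((p + y) - (a + B *ᵥ (-q' + v))) ⬝ᵥ Ww *ᵥ ((p + y) - (a + B *ᵥ (-q' + v)))
      + (-q' + v) ⬝ᵥ Rb *ᵥ (-q' + v) + (p + y) ⬝ᵥ Pk *ᵥ (p + y)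
    = a ⬝ᵥ w + ((y - B *ᵥ v) ⬝ᵥ Ww *ᵥ (y - B *ᵥ v) + v ⬝ᵥ Rb *ᵥ v + y ⬝ᵥ Pk *ᵥ y) := by
  have hres : (p + y) - (a + B *ᵥ (-q' + v)) = (y - B *ᵥ v) - r := by
    rw [ha, mulVec_add, mulVec_neg]
    abel
  have huv : (-q' + v : Fin nu → ℝ) = v - q' := by abel
  rw [hres, huv, quad_sub Ww hWs hr, quad_sub Rb hRs hq, quad_add Pk hPs hp]
  have hBv : ∀ s : Fin nu → ℝ, (B *ᵥ s) ⬝ᵥ w = s ⬝ᵥ (Bᵀ *ᵥ w) := fun s => by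
    rw [dp_swap Bᵀ s w, transpose_transpose]
  have hd : (y - B *ᵥ v) ⬝ᵥ w = y ⬝ᵥ w - v ⬝ᵥ (Bᵀ *ᵥ w) := by
    rw [sub_dotProduct, hBv]
  have haw : a ⬝ᵥ w = p ⬝ᵥ w + q' ⬝ᵥ (Bᵀ *ᵥ w) + r ⬝ᵥ w := by
    rw [ha, add_dotProduct, add_dotProduct, hBv]
  rw [hd, haw]
  ring

end Stmt9Aux

open Stmt9Aux in
theorem stmt9 {nx nu : ℕ}
    (A : Matrix (Fin nx) (Fin nx) ℝ) (B : Matrix (Fin nx) (Fin nu) ℝ)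
    (Ww Pk : Matrix (Fin nx) (Fin nx) ℝ) (Q : Matrix (Fin nx) (Fin nx) ℝ)
    (R : Matrix (Fin nu) (Fin nu) ℝ) (lam : ℝ)
    (hWw : Ww.PosDef) (hPk : Pk.PosDef) (hQ : Q.PosSemidef) (hR : R.PosDef)
    (hlam : 0 < lam)
    (hinv : IsUnit (Pk⁻¹ + B * (lam • R)⁻¹ * Bᵀ + Ww⁻¹).det) :
    ∃ c > (0 : ℝ), ∀ xprev : Fin nx → ℝ,
      (∫ xk : Fin nx → ℝ, ∫ u : Fin nu → ℝ,
          gaussKer Ww (A *ᵥ xprev + B *ᵥ u) xk * gaussKer (lam • R) 0 u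
            * gaussKer Pk 0 xk)
        * Real.exp (-(1 / 2) * lam * (xprev ⬝ᵥ Q *ᵥ xprev))
      = c * gaussKer (Aᵀ * (Pk⁻¹ + B * (lam • R)⁻¹ * Bᵀ + Ww⁻¹)⁻¹ * A + lam • Q)
          0 xprev := by
  classical
  set Rb := lam • R with hRbdef
  have hRb : Rb.PosDef := by
    refine PosDef.of_dotProduct_mulVec_pos ?_ fun x hx => ?_
    · show Rbᴴ = Rb
      rw [hRbdef, conjTranspose_smul, star_trivial, hR.1]
    · rw [hRbdef, smul_mulVec, dotProduct_smul]
      have := hR.dotProduct_mulVec_pos hx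
      exact smul_pos hlam this
  set S := Pk⁻¹ + B * Rb⁻¹ * Bᵀ + Ww⁻¹ with hSdef
  -- symmetry facts
  have hWs : Wwᵀ = Ww := hWw.1
  have hPs : Pkᵀ = Pk := hPk.1
  have hRs : Rbᵀ = Rb := hRb.1
  have hSs : Sᵀ = S := by
    rw [hSdef]
    simp only [transpose_add, transpose_mul, transpose_nonsing_inv, transpose_transpose,
      hWs, hPs, hRs]
    rw [Matrix.mul_assoc]
  -- invertibility facts
  have hWdet : IsUnit Ww.det := hWw.det_pos.ne'.isUnit
  have hPdet : IsUnit Pk.det := hPk.det_pos.ne'.isUnit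
  have hRdet : IsUnit Rb.det := hRb.det_pos.ne'.isUnit
  -- the constant
  set G0 : (Fin nx → ℝ) → (Fin nu → ℝ) → ℝ := fun y v =>
    gaussKer Ww (B *ᵥ v) y * gaussKer Rb 0 v * gaussKer Pk 0 y with hG0def
  have hG0pos : ∀ y v, 0 < G0 y v := fun y v =>
    mul_pos (mul_pos (Real.exp_pos _) (Real.exp_pos _)) (Real.exp_pos _)
  have hG0cont : Continuous fun pr : (Fin nx → ℝ) × (Fin nu → ℝ) => G0 pr.1 pr.2 := by
    apply Continuous.mul
    apply Continuous.mul
    · exact Real.continuous_exp.comp (continuous_const.mul ((continuous_quad Ww).comp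
        (continuous_fst.sub ((continuous_mulVec B).comp continuous_snd))))
    · exact Real.continuous_exp.comp (continuous_const.mul ((continuous_quad Rb).comp
        (continuous_snd.sub continuous_const)))
    · exact Real.continuous_exp.comp (continuous_const.mul ((continuous_quad Pk).comp
        (continuous_fst.sub continuous_const)))
  have hGvInt : Integrable fun v : Fin nu → ℝ => gaussKer Rb 0 v := by
    have := integrable_gaussQuad hRb
    refine this.congr (Filter.Eventually.of_forall fun v => ?_)
    simp [gaussKer]
  have hGyInt : Integrable fun y : Fin nx → ℝ => gaussKer Pk 0 y := by
    have := integrable_gaussQuad hPk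
    refine this.congr (Filter.Eventually.of_forall fun y => ?_)
    simp [gaussKer]
  have hbound : ∀ y v, G0 y v ≤ gaussKer Pk 0 y * gaussKer Rb 0 v := by
    intro y v
    have h1 : gaussKer Ww (B *ᵥ v) y ≤ 1 := by
      rw [gaussKer, Real.exp_le_one_iff]
      have := hWw.posSemidef.dotProduct_mulVec_nonneg (y - B *ᵥ v)
      simp only [star_trivial] at this
      nlinarith
    have h2 : 0 < gaussKer Rb 0 v := Real.exp_pos _
    have h3 : 0 < gaussKer Pk 0 y := Real.exp_pos _
    calc G0 y v = gaussKer Ww (B *ᵥ v) y * gaussKer Rb 0 v * gaussKer Pk 0 y := rfl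
      _ ≤ 1 * gaussKer Rb 0 v * gaussKer Pk 0 y :=
          mul_le_mul_of_nonneg_right (mul_le_mul_of_nonneg_right h1 h2.le) h3.le
      _ = gaussKer Pk 0 y * gaussKer Rb 0 v := by ring
  have hInner : ∀ y, Integrable (fun v => G0 y v) := by
    intro y
    refine (hGvInt.const_mul (gaussKer Pk 0 y)).mono' ?_ ?_
    · exact (hG0cont.comp (Continuous.prodMk_right y)).aestronglyMeasurable
    · exact Filter.Eventually.of_forall fun v => by
        rw [Real.norm_eq_abs, abs_of_pos (hG0pos y v)]
        exact hbound y v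
  have hhmeas : StronglyMeasurable fun y => ∫ v, G0 y v :=
    hG0cont.stronglyMeasurable.integral_prod_right'
  have hhpos : ∀ y, 0 < ∫ v, G0 y v := by
    intro y
    rw [integral_pos_iff_support_of_nonneg (fun v => (hG0pos y v).le) (hInner y)]
    have : Function.support (fun v => G0 y v) = Set.univ :=
      Set.eq_univ_of_forall fun v => (hG0pos y v).ne'
    rw [this]
    exact isOpen_univ.measure_pos volume ⟨0, trivial⟩
  have hCv : (0:ℝ) ≤ ∫ v, gaussKer Rb 0 v := integral_nonneg fun v => (Real.exp_pos _).le
  have hhInt : Integrable fun y => ∫ v, G0 y v := by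
    refine (hGyInt.mul_const (∫ v, gaussKer Rb 0 v)).mono'
      hhmeas.aestronglyMeasurable ?_
    refine Filter.Eventually.of_forall fun y => ?_
    rw [Real.norm_eq_abs, abs_of_pos (hhpos y)]
    calc (∫ v, G0 y v) ≤ ∫ v, gaussKer Pk 0 y * gaussKer Rb 0 v :=
          integral_mono (hInner y) (hGvInt.const_mul _) (hbound y)
      _ = gaussKer Pk 0 y * ∫ v, gaussKer Rb 0 v := integral_const_mul _ _
  refine ⟨∫ y, ∫ v, G0 y v, ?_, fun x => ?_⟩
  · have hgoal : 0 < ∫ y, ∫ v, G0 y v := by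
      rw [integral_pos_iff_support_of_nonneg (fun y => (hhpos y).le) hhInt]
      have : Function.support (fun y => ∫ v, G0 y v) = Set.univ :=
        Set.eq_univ_of_forall fun y => (hhpos y).ne'
      rw [this]
      exact isOpen_univ.measure_pos volume ⟨0, trivial⟩
    exact hgoal
  -- the main computation
  · set a : Fin nx → ℝ := A *ᵥ x with hadef
    set w : Fin nx → ℝ := S⁻¹ *ᵥ a with hwdef
    set p : Fin nx → ℝ := Pk⁻¹ *ᵥ w with hpdef
    set q' : Fin nu → ℝ := Rb⁻¹ *ᵥ (Bᵀ *ᵥ w) with hqdef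
    set r : Fin nx → ℝ := Ww⁻¹ *ᵥ w with hrdef
    have hp : Pk *ᵥ p = w := by
      rw [hpdef, mulVec_mulVec, mul_nonsing_inv _ hPdet, one_mulVec]
    have hq : Rb *ᵥ q' = Bᵀ *ᵥ w := by
      rw [hqdef, mulVec_mulVec, mul_nonsing_inv _ hRdet, one_mulVec]
    have hr : Ww *ᵥ r = w := by
      rw [hrdef, mulVec_mulVec, mul_nonsing_inv _ hWdet, one_mulVec]
    have hSw : S *ᵥ w = a := by
      rw [hwdef, mulVec_mulVec, mul_nonsing_inv _ hinv, one_mulVec]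
    have ha : a = p + B *ᵥ q' + r := by
      rw [← hSw, hSdef]
      simp only [add_mulVec, mulVec_mulVec, hpdef, hqdef, hrdef]
      rw [Matrix.mul_assoc]
    have haw : a ⬝ᵥ w = x ⬝ᵥ (Aᵀ * S⁻¹ * A) *ᵥ x := by
      rw [hwdef, hadef]
      rw [← mulVec_mulVec, ← mulVec_mulVec, dp_swap Aᵀ, transpose_transpose]
    set K : ℝ := Real.exp (-(1 / 2) * (a ⬝ᵥ w)) with hKdef
    have hpoint : ∀ y v,
        gaussKer Ww (a + B *ᵥ (-q' + v)) (p + y) * gaussKer Rb 0 (-q' + v)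
          * gaussKer Pk 0 (p + y) = K * G0 y v := by
      intro y v
      rw [hG0def, hKdef]
      simp only [gaussKer, sub_zero]
      simp only [← Real.exp_add]
      congr 1
      have := key_identity Ww Pk Rb B hWs hRs hPs a w p r q' y v hp hq hr ha
      linarith
    have hstep : (∫ xk : Fin nx → ℝ, ∫ u : Fin nu → ℝ,
        gaussKer Ww (a + B *ᵥ u) xk * gaussKer Rb 0 u * gaussKer Pk 0 xk)
        = K * ∫ y, ∫ v, G0 y v := by
      rw [← integral_add_left_eq_self (fun xk => ∫ u : Fin nu → ℝ,
        gaussKer Ww (a + B *ᵥ u) xk * gaussKer Rb 0 u * gaussKer Pk 0 xk) p]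
      have hy : ∀ y, (∫ u : Fin nu → ℝ,
          gaussKer Ww (a + B *ᵥ u) (p + y) * gaussKer Rb 0 u * gaussKer Pk 0 (p + y))
          = K * ∫ v, G0 y v := by
        intro y
        rw [← integral_add_left_eq_self (fun u : Fin nu → ℝ =>
          gaussKer Ww (a + B *ᵥ u) (p + y) * gaussKer Rb 0 u * gaussKer Pk 0 (p + y)) (-q')]
        simp only [hpoint]
        exact integral_const_mul K _
      simp only [hy]
      exact integral_const_mul K _
    rw [hstep]
    -- final exponent bookkeeping
    rw [gaussKer, sub_zero, hKdef]
    rw [mul_comm K, mul_assoc, mul_comm K, ← Real.exp_add]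
    congr 2
    have hsplit : x ⬝ᵥ (Aᵀ * S⁻¹ * A + lam • Q) *ᵥ x
        = x ⬝ᵥ (Aᵀ * S⁻¹ * A) *ᵥ x + lam * (x ⬝ᵥ Q *ᵥ x) := by
      rw [add_mulVec, dotProduct_add, smul_mulVec, dotProduct_smul, smul_eq_mul]
    rw [hsplit, ← haw]
    ring
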